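/- Let f : N → M be a homomorphism of finitely generated modules over a Noetherian local ring R that is an isomorphism after localizing at every prime ideal other than the maximal ideal. If depth_R(N) ≥ 2 and depth_R(M) ≥ 1, then f is an isomorphism. -/

import Mathlib

/-!
Both `ker f` and `coker f` vanish after localizing at every non-maximal prime, so their
support is contained in the closed point; a nonzero such module then has the maximal ideal `𝔪`
as an associated prime, i.e. contains a nonzero element killed by `𝔪`. In `ker f ⊆ N` such an
element is killed by an `N`-regular element of `𝔪`, which is absurd. In `coker f` it lifts to
`m ∈ M` with `𝔪 • m ⊆ f(N)`; an `N`-regular sequence `r, s` in `𝔪` yields `n` with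
`r • (m - f n) = 0`, and an `M`-regular `x ∈ 𝔪` then forces `m = f n`.
-/

/-- `depthGE R M n` : the depth of the module `M` over the local ring `R` is at least `n`. -/
def depthGE (R : Type*) [CommRing R] [IsLocalRing R]
    (M : Type*) [AddCommGroup M] [Module R M] (n : ℕ) : Prop :=
  ∃ rs : List R, rs.length = n ∧ (∀ r ∈ rs, r ∈ IsLocalRing.maximalIdeal R) ∧
    RingTheory.Sequence.IsWeaklyRegular M rs

open IsLocalRing LinearMap

section depthGE

variable {R M : Type*} [CommRing R] [IsLocalRing R] [AddCommGroup M] [Module R M]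

theorem depthGE_one_iff :
    depthGE R M 1 ↔ ∃ x ∈ maximalIdeal R, IsSMulRegular M x := by
  simp only [depthGE, List.length_eq_one_iff]
  constructor
  · rintro ⟨_, ⟨x, rfl⟩, hmem, hreg⟩
    exact ⟨x, hmem x (by simp), (RingTheory.Sequence.isWeaklyRegular_singleton_iff M x).mp hreg⟩
  · rintro ⟨x, hxm, hx⟩
    exact ⟨[x], ⟨x, rfl⟩, by simpa using hxm,
      (RingTheory.Sequence.isWeaklyRegular_singleton_iff M x).mpr hx⟩

theorem depthGE_two_iff :
    depthGE R M 2 ↔ ∃ r ∈ maximalIdeal R, ∃ s ∈ maximalIdeal R,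
      IsSMulRegular M r ∧ IsSMulRegular (QuotSMulTop r M) s := by
  have hreg (r s : R) : RingTheory.Sequence.IsWeaklyRegular M [r, s] ↔
      IsSMulRegular M r ∧ IsSMulRegular (QuotSMulTop r M) s := by
    rw [RingTheory.Sequence.isWeaklyRegular_cons_iff,
      RingTheory.Sequence.isWeaklyRegular_singleton_iff]
  simp only [depthGE, List.length_eq_two]
  constructor
  · rintro ⟨_, ⟨r, s, rfl⟩, hmem, hrs⟩
    exact ⟨r, hmem r (by simp), s, hmem s (by simp), (hreg r s).mp hrs⟩
  · rintro ⟨r, hrm, s, hsm, hrs⟩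
    refine ⟨[r, s], ⟨r, s, rfl⟩, ?_, (hreg r s).mpr hrs⟩
    simp only [List.mem_cons, List.not_mem_nil, or_false, forall_eq_or_imp, forall_eq]
    exact ⟨hrm, hsm⟩

end depthGE

namespace IsLocalizedModule

variable {R N M N' M' : Type*} [CommSemiring R] (S : Submonoid R)
  [AddCommMonoid N] [Module R N] [AddCommMonoid M] [Module R M]
  [AddCommMonoid N'] [Module R N'] [AddCommMonoid M'] [Module R M']
  (g : N →ₗ[R] N') (g' : M →ₗ[R] M') [IsLocalizedModule S g] [IsLocalizedModule S g']
  {f : N →ₗ[R] M}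

theorem exists_smul_eq_zero_of_map_injective (hf : Function.Injective (map S g g' f))
    {k : N} (hk : f k = 0) : ∃ u : S, u • k = 0 := by
  have : g k = g 0 := hf (by rw [map_apply, hk, map_zero, map_zero, map_zero])
  simpa using exists_of_eq (S := S) this

theorem exists_smul_mem_range_of_map_surjective (hf : Function.Surjective (map S g g' f))
    (m : M) : ∃ u : S, u • m ∈ range f := by
  obtain ⟨z, hz⟩ := hf (g' m)
  obtain ⟨⟨n, t⟩, rfl⟩ := mk'_surjective S g z
  rw [Function.uncurry_apply_pair, map_mk', mk'_eq_iff, Submonoid.smul_def, ← map_smul] at hz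
  obtain ⟨c, hc⟩ := exists_of_eq (S := S) hz
  simp only [Submonoid.smul_def, ← map_smul] at hc
  exact ⟨c * t, (c : R) • n, by rw [hc, Submonoid.smul_def, Submonoid.coe_mul, mul_smul]⟩

end IsLocalizedModule

section Localization

variable {R N M N' M' : Type*} [CommRing R] [AddCommGroup N] [Module R N]
  [AddCommGroup M] [Module R M] [AddCommGroup N'] [Module R N'] [AddCommGroup M'] [Module R M']
  (p : PrimeSpectrum R) (g : N →ₗ[R] N') (g' : M →ₗ[R] M')
  [IsLocalizedModule p.asIdeal.primeCompl g] [IsLocalizedModule p.asIdeal.primeCompl g']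
  {f : N →ₗ[R] M}

theorem notMem_support_ker_of_map_injective
    (hf : Function.Injective (IsLocalizedModule.map p.asIdeal.primeCompl g g' f)) :
    p ∉ Module.support R (ker f) := by
  refine Module.notMem_support_iff'.mpr fun k ↦ ?_
  obtain ⟨u, hu⟩ := IsLocalizedModule.exists_smul_eq_zero_of_map_injective _ g g' hf k.2
  exact ⟨u, u.2, Subtype.ext hu⟩

theorem notMem_support_quotient_range_of_map_surjective
    (hf : Function.Surjective (IsLocalizedModule.map p.asIdeal.primeCompl g g' f)) :
    p ∉ Module.support R (M ⧸ range f) := by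
  refine Module.notMem_support_iff'.mpr fun c ↦ ?_
  obtain ⟨m, rfl⟩ := Submodule.Quotient.mk_surjective _ c
  obtain ⟨u, hu⟩ := IsLocalizedModule.exists_smul_mem_range_of_map_surjective _ g g' hf m
  exact ⟨u, u.2, by rwa [← Submodule.Quotient.mk_smul, Submodule.Quotient.mk_eq_zero]⟩

end Localization

section Support

variable {R P : Type*} [CommRing R] [AddCommGroup P] [Module R P]

theorem IsAssociatedPrime.mem_support {p : PrimeSpectrum R}
    (h : IsAssociatedPrime p.asIdeal P) : p ∈ Module.support R P := by
  obtain ⟨-, x, hx⟩ := h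
  refine Module.mem_support_iff'.mpr ⟨x, fun a ha hax ↦ ha ?_⟩
  rw [hx]
  exact Ideal.le_radical (by rwa [Submodule.mem_colon_singleton, Submodule.mem_bot])

theorem exists_ne_zero_forall_smul_eq_zero_of_support_subset [IsNoetherianRing R]
    [IsLocalRing R] [Nontrivial P] (h : Module.support R P ⊆ {closedPoint R}) :
    ∃ x : P, x ≠ 0 ∧ ∀ a ∈ maximalIdeal R, a • x = 0 := by
  obtain ⟨I, hI⟩ := associatedPrimes.nonempty R P
  obtain rfl : I = maximalIdeal R :=
    congrArg PrimeSpectrum.asIdeal (h (IsAssociatedPrime.mem_support (p := ⟨I, hI.isPrime⟩) hI))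
  obtain ⟨-, x, hx⟩ := isAssociatedPrime_iff.mp hI
  have hmem (a : R) : a ∈ maximalIdeal R ↔ a • x = 0 := by
    rw [hx, Submodule.mem_colon_singleton, Submodule.mem_bot]
  refine ⟨x, fun hx0 ↦ ?_, fun a ha ↦ (hmem a).mp ha⟩
  exact (maximalIdeal.isMaximal R).ne_top
    ((Ideal.eq_top_iff_one _).mpr ((hmem 1).mpr (by rw [hx0, smul_zero])))

end Support

section Depth

variable {R N M : Type*} [CommRing R] [AddCommGroup N] [Module R N] [AddCommGroup M] [Module R M]
  {f : N →ₗ[R] M}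

theorem exists_smul_sub_eq_zero_of_smul_mem_range (hf : Function.Injective f) {r s : R}
    (hs : IsSMulRegular (QuotSMulTop r N) s) {m : M}
    (hrm : r • m ∈ range f) (hsm : s • m ∈ range f) : ∃ n, r • (m - f n) = 0 := by
  obtain ⟨nr, hnr⟩ := hrm
  obtain ⟨ns, hns⟩ := hsm
  have hcomm : s • nr = r • ns := hf (by rw [map_smul, map_smul, hnr, hns, smul_comm])
  have hq : s • (Submodule.Quotient.mk nr : QuotSMulTop r N) = 0 := by
    rw [← Submodule.Quotient.mk_smul, hcomm, Submodule.Quotient.mk_eq_zero]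
    exact Submodule.smul_mem_pointwise_smul ns r ⊤ trivial
  obtain ⟨n, -, hn⟩ := (Submodule.mem_smul_pointwise_iff_exists _ _ _).mp
    ((Submodule.Quotient.mk_eq_zero _).mp (hs.right_eq_zero_of_smul hq))
  exact ⟨n, by rw [smul_sub, ← map_smul, hn, hnr, sub_self]⟩

theorem eq_zero_of_smul_eq_zero_of_smul_mem_range (hf : Function.Injective f) {r x : R}
    (hr : IsSMulRegular N r) (hx : IsSMulRegular M x) {m : M}
    (hrm : r • m = 0) (hxm : x • m ∈ range f) : m = 0 := by
  obtain ⟨n, hn⟩ := hxm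
  have hn0 : n = 0 := hr.right_eq_zero_of_smul <| hf <| by
    rw [map_smul, map_zero, hn, smul_comm, hrm, smul_zero]
  exact hx.right_eq_zero_of_smul (by rw [← hn, hn0, map_zero])

theorem mem_range_of_smul_mem_range (hf : Function.Injective f) {r s x : R}
    (hr : IsSMulRegular N r) (hs : IsSMulRegular (QuotSMulTop r N) s) (hx : IsSMulRegular M x)
    {m : M} (hrm : r • m ∈ range f) (hsm : s • m ∈ range f) (hxm : x • m ∈ range f) :
    m ∈ range f := by
  obtain ⟨n, hn⟩ := exists_smul_sub_eq_zero_of_smul_mem_range hf hs hrm hsm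
  have hxmn : x • (m - f n) ∈ range f := by
    rw [smul_sub, ← map_smul]
    exact sub_mem hxm (mem_range_self f _)
  rw [← sub_add_cancel m (f n), eq_zero_of_smul_eq_zero_of_smul_mem_range hf hr hx hn hxmn,
    zero_add]
  exact mem_range_self f n

end Depth

section LocalRing

variable {R N M : Type*} [CommRing R] [IsNoetherianRing R] [IsLocalRing R]
  [AddCommGroup N] [Module R N] [AddCommGroup M] [Module R M] {f : N →ₗ[R] M}

theorem LinearMap.injective_of_support_ker_subset {r : R} (hrm : r ∈ maximalIdeal R)
    (hr : IsSMulRegular N r) (h : Module.support R (ker f) ⊆ {closedPoint R}) :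
    Function.Injective f := by
  rw [← ker_eq_bot]
  by_contra hne
  have := Submodule.nontrivial_iff_ne_bot.mpr hne
  obtain ⟨k, hk0, hk⟩ := exists_ne_zero_forall_smul_eq_zero_of_support_subset h
  exact hk0 (Subtype.ext (hr.right_eq_zero_of_smul (congrArg Subtype.val (hk r hrm))))

theorem LinearMap.surjective_of_support_quotient_range_subset (hf : Function.Injective f)
    {r s x : R} (hrm : r ∈ maximalIdeal R) (hsm : s ∈ maximalIdeal R)
    (hxm : x ∈ maximalIdeal R)
    (hr : IsSMulRegular N r) (hs : IsSMulRegular (QuotSMulTop r N) s) (hx : IsSMulRegular M x)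
    (h : Module.support R (M ⧸ range f) ⊆ {closedPoint R}) :
    Function.Surjective f := by
  rw [← range_eq_top]
  by_contra hne
  have := Submodule.Quotient.nontrivial_iff.mpr hne
  obtain ⟨c, hc0, hc⟩ := exists_ne_zero_forall_smul_eq_zero_of_support_subset h
  obtain ⟨m, rfl⟩ := Submodule.Quotient.mk_surjective _ c
  have hmem {a : R} (ha : a ∈ maximalIdeal R) : a • m ∈ range f := by
    rw [← Submodule.Quotient.mk_eq_zero, Submodule.Quotient.mk_smul]
    exact hc a ha
  exact hc0 ((Submodule.Quotient.mk_eq_zero _).mpr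
    (mem_range_of_smul_mem_range hf hr hs hx (hmem hrm) (hmem hsm) (hmem hxm)))

end LocalRing

theorem bijective_of_localized_bijective_of_depth_general
    {R : Type*} [CommRing R] [IsNoetherianRing R] [IsLocalRing R]
    {N M : Type*} [AddCommGroup N] [Module R N]
    [AddCommGroup M] [Module R M]
    (f : N →ₗ[R] M)
    (hloc : ∀ (p : Ideal R) [p.IsPrime], p ≠ IsLocalRing.maximalIdeal R →
      Function.Bijective
        (IsLocalizedModule.map p.primeCompl
          (LocalizedModule.mkLinearMap p.primeCompl N)
          (LocalizedModule.mkLinearMap p.primeCompl M) f))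
    (hN : depthGE R N 2) (hM : depthGE R M 1) :
    Function.Bijective f := by
  obtain ⟨r, hrm, s, hsm, hr, hs⟩ := depthGE_two_iff.mp hN
  obtain ⟨x, hxm, hx⟩ := depthGE_one_iff.mp hM
  have hloc' (p : PrimeSpectrum R) (hp : p ≠ closedPoint R) :=
    hloc p.asIdeal fun h ↦ hp (PrimeSpectrum.ext h)
  have hker : Module.support R (ker f) ⊆ {closedPoint R} := fun p hp ↦
    by_contra fun hpm ↦ notMem_support_ker_of_map_injective p _ _ (hloc' p hpm).1 hp
  have hcoker : Module.support R (M ⧸ range f) ⊆ {closedPoint R} := fun p hp ↦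
    by_contra fun hpm ↦ notMem_support_quotient_range_of_map_surjective p _ _ (hloc' p hpm).2 hp
  have hinj := injective_of_support_ker_subset hrm hr hker
  exact ⟨hinj, surjective_of_support_quotient_range_subset hinj hrm hsm hxm hr hs hx hcoker⟩

/-- A homomorphism `f : N → M` of finitely generated modules over a Noetherian local ring
that is an isomorphism after localization at every prime ideal other than the maximal
ideal is an isomorphism, provided `depth N ≥ 2` and `depth M ≥ 1`. -/
theorem bijective_of_localized_bijective_of_depth
    {R : Type*} [CommRing R] [IsNoetherianRing R] [IsLocalRing R]
    {N M : Type*} [AddCommGroup N] [Module R N] [Module.Finite R N]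
    [AddCommGroup M] [Module R M] [Module.Finite R M]
    (f : N →ₗ[R] M)
    (hloc : ∀ (p : Ideal R) [p.IsPrime], p ≠ IsLocalRing.maximalIdeal R →
      Function.Bijective
        (IsLocalizedModule.map p.primeCompl
          (LocalizedModule.mkLinearMap p.primeCompl N)
          (LocalizedModule.mkLinearMap p.primeCompl M) f))
    (hN : depthGE R N 2) (hM : depthGE R M 1) :
    Function.Bijective f :=
  bijective_of_localized_bijective_of_depth_general f hloc hN hM
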